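/- arXiv:1806.07866 — 2 statements merged into one kernel-verified Lean document; each statement's English description precedes it below -/
import Mathlib

section
/- Let ν be a finite positive discrete measure on the unit circle T with infinite support. For any bijection σ: Z → N, the sequence f_n = z^{σ^{-1}(n)} (n ∈ N) is never a Schauder basis of L²(T, ν). -/
open Filter Topology MeasureTheory

/-- `f` is a Schauder basis of `H`: every `x` has a unique norm-convergent expansion. -/
def IsSchauderBasis {H : Type*} [NormedAddCommGroup H] [Module ℂ H]
    (f : ℕ → H) : Prop :=
  ∀ x : H, ∃! a : ℕ → ℂ,
    Tendsto (fun k => ∑ n ∈ Finset.range k, a n • f n) atTop (𝓝 x)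

/-!
In a Banach space the partial-sum maps of a Schauder basis are uniformly bounded (open mapping
theorem), so `‖f p‖ ≤ C * ‖f p - f q‖` whenever `p < q`. On the other hand, the countably many
points of the circle carrying `ν`, viewed as a single element of the compact group `s → Circle`,
have powers `z ^ nₖ` tending to `1` simultaneously along a subsequence, hence `z ^ nₖ → 1` in
`L²(ν)` by bounded convergence. With `p = σ 0` (the constant function `1`) and `q = σ nₖ` this
forces the basis vector `1` to vanish.
-/

open Finset

section SchauderBasis

variable {H : Type*} [NormedAddCommGroup H] [NormedSpace ℂ H] {f : ℕ → H}

theorem sum_range_piSingle_smul (f : ℕ → H) (p k : ℕ) :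
    ∑ n ∈ range k, (Pi.single p 1 : ℕ → ℂ) n • f n = if p < k then f p else 0 := by
  simp [Pi.single_apply, ite_smul]

theorem IsSchauderBasis.ne_zero (hf : IsSchauderBasis f) (n : ℕ) : f n ≠ 0 := by
  intro hn
  have hsum (k : ℕ) : ∑ m ∈ range k, (Pi.single n 1 : ℕ → ℂ) m • f m = 0 := by
    simp [sum_range_piSingle_smul, hn]
  have := (hf 0).unique (y₁ := Pi.single n (1 : ℂ)) (y₂ := 0) (by simp [hsum]) (by simp)
  simpa using congrFun this n

/-- Convergent sequences of partial sums of series `∑ aₙ fₙ`, as continuous maps on the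
one-point compactification `ℕ ∪ {∞}` whose value at `∞` is the sum. -/
def convergentPartialSums (f : ℕ → H) : Submodule ℂ C(OnePoint ℕ, H) :=
  (ContinuousMap.evalCLM (M := H) ℂ ((0 : ℕ) : OnePoint ℕ)).ker ⊓
    ⨅ k : ℕ, (Submodule.span ℂ {f k}).comap
      (ContinuousMap.evalCLM ℂ ((k + 1 : ℕ) : OnePoint ℕ) -
        ContinuousMap.evalCLM ℂ (k : OnePoint ℕ) : C(OnePoint ℕ, H) →L[ℂ] H).toLinearMap

theorem mem_convergentPartialSums_iff {g : C(OnePoint ℕ, H)} :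
    g ∈ convergentPartialSums f ↔ ∃ a : ℕ → ℂ, ∀ k : ℕ, g k = ∑ n ∈ range k, a n • f n := by
  simp only [convergentPartialSums, Submodule.mem_inf, LinearMap.mem_ker, Submodule.mem_iInf,
    Submodule.mem_comap, Submodule.mem_span_singleton, ContinuousLinearMap.coe_coe,
    sub_apply, ContinuousMap.evalCLM_apply]
  constructor
  · rintro ⟨h0, hstep⟩
    choose a ha using hstep
    refine ⟨a, fun k => ?_⟩
    induction k with
    | zero => simpa using h0
    | succ k ih => rw [sum_range_succ, ← ih, ha k, add_sub_cancel]
  · rintro ⟨a, ha⟩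
    refine ⟨by simpa using ha 0, fun k => ⟨a k, ?_⟩⟩
    rw [ha, ha, sum_range_succ, add_sub_cancel_left]

theorem isClosed_convergentPartialSums (f : ℕ → H) :
    IsClosed (convergentPartialSums f : Set C(OnePoint ℕ, H)) := by
  simp only [convergentPartialSums, Submodule.coe_inf, Submodule.coe_iInf, Submodule.comap_coe,
    ContinuousLinearMap.coe_coe]
  exact (ContinuousLinearMap.isClosed_ker _).inter <| isClosed_iInter fun k =>
    (Submodule.closed_of_finiteDimensional _).preimage (map_continuous _)

def seriesSumCLM (f : ℕ → H) : convergentPartialSums f →L[ℂ] H :=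
  (ContinuousMap.evalCLM ℂ OnePoint.infty).comp (convergentPartialSums f).subtypeL

theorem tendsto_seriesSumCLM (g : convergentPartialSums f) :
    Tendsto (fun k : ℕ => (g : C(OnePoint ℕ, H)) k) atTop (𝓝 (seriesSumCLM f g)) :=
  (OnePoint.continuous_iff_from_nat _).1 (map_continuous _)

theorem IsSchauderBasis.surjective_seriesSumCLM (hf : IsSchauderBasis f) :
    Function.Surjective (seriesSumCLM f) := fun x => by
  obtain ⟨a, ha, -⟩ := hf x
  let g := OnePoint.continuousMapMkNat _ x ha
  exact ⟨⟨g, mem_convergentPartialSums_iff.2 ⟨a, fun k => rfl⟩⟩, rfl⟩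

theorem IsSchauderBasis.exists_norm_sum_range_le [CompleteSpace H] (hf : IsSchauderBasis f) :
    ∃ C, ∀ (a : ℕ → ℂ) (x : H), Tendsto (fun k => ∑ n ∈ range k, a n • f n) atTop (𝓝 x) →
      ∀ k, ‖∑ n ∈ range k, a n • f n‖ ≤ C * ‖x‖ := by
  have : CompleteSpace (convergentPartialSums f) :=
    (isClosed_convergentPartialSums f).completeSpace_coe
  obtain ⟨C, -, hC⟩ := (seriesSumCLM f).exists_preimage_norm_le hf.surjective_seriesSumCLM
  refine ⟨C, fun a x ha k => ?_⟩
  obtain ⟨g, rfl, hg⟩ := hC x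
  obtain ⟨b, hb⟩ := mem_convergentPartialSums_iff.1 g.2
  rw [(hf _).unique ha ((tendsto_seriesSumCLM g).congr hb), ← hb]
  exact (ContinuousMap.norm_coe_le_norm _ _).trans hg

theorem IsSchauderBasis.exists_norm_le_mul_norm_sub [CompleteSpace H] (hf : IsSchauderBasis f) :
    ∃ C, ∀ p q, p < q → ‖f p‖ ≤ C * ‖f p - f q‖ := by
  obtain ⟨C, hC⟩ := hf.exists_norm_sum_range_le
  refine ⟨C, fun p q hpq => ?_⟩
  have hsum (k : ℕ) : ∑ n ∈ range k, (Pi.single p 1 - Pi.single q 1 : ℕ → ℂ) n • f n =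
      (if p < k then f p else 0) - (if q < k then f q else 0) := by
    simp only [Pi.sub_apply, sub_smul, sum_sub_distrib, sum_range_piSingle_smul]
  have hlim : Tendsto (fun k => ∑ n ∈ range k, (Pi.single p 1 - Pi.single q 1 : ℕ → ℂ) n • f n)
      atTop (𝓝 (f p - f q)) :=
    tendsto_const_nhds.congr' <| (eventually_gt_atTop q).mono fun k hk => by
      simp only [hsum, if_pos (hpq.trans hk), if_pos hk]
  have := hC _ _ hlim (p + 1)
  rwa [hsum, if_pos p.lt_succ_self, if_neg (by omega), sub_zero] at this

end SchauderBasis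

theorem exists_strictMono_tendsto_pow_one {s : Set ℂ} (hs : s.Countable)
    (hcirc : s ⊆ {z : ℂ | ‖z‖ = 1}) :
    ∃ n : ℕ → ℕ, StrictMono n ∧ ∀ z ∈ s, Tendsto (fun k => z ^ n k) atTop (𝓝 1) := by
  have : Countable s := hs.to_subtype
  let g : s → Circle := fun z => ⟨z, mem_sphere_zero_iff_norm.2 (hcirc z.2)⟩
  obtain ⟨n, hn, hlim⟩ := (mapClusterPt_one_atTop_pow g).tendsto_subseq
  refine ⟨n, hn, fun z hz => ?_⟩
  have hcoord : Tendsto (fun k => (g ^ n k) ⟨z, hz⟩) atTop (𝓝 1) :=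
    ((continuous_apply _).tendsto 1).comp hlim
  exact (continuous_subtype_val.tendsto 1).comp hcoord

theorem unifIntegrable_of_ae_nnnorm_le {α ι E : Type*} [MeasurableSpace α] {μ : Measure α}
    [NormedAddCommGroup E] {p : ENNReal} (hp : 1 ≤ p) (hp' : p ≠ ⊤) {f : ι → α → E}
    (hf : ∀ i, AEStronglyMeasurable (f i) μ) {C : NNReal} (hC : ∀ i, ∀ᵐ x ∂μ, ‖f i x‖₊ ≤ C) :
    UnifIntegrable f p μ := by
  refine unifIntegrable_of hp hp' hf fun ε _ => ⟨C + 1, fun i => ?_⟩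
  have : {x | C + 1 ≤ ‖f i x‖₊}.indicator (f i) =ᵐ[μ] (0 : α → E) := by
    filter_upwards [hC i] with x hx
    refine Set.indicator_of_notMem (fun h => ?_) _
    exact (lt_add_one C).not_ge (le_trans h hx)
  simp [eLpNorm_congr_ae this]

theorem Lp.tendsto_of_ae_tendsto_of_ae_nnnorm_le {α E : Type*} [MeasurableSpace α]
    {μ : Measure α} [IsFiniteMeasure μ] [NormedAddCommGroup E] {p : ENNReal} [Fact (1 ≤ p)]
    (hp : p ≠ ⊤) {f : ℕ → Lp E p μ} {g : Lp E p μ} {C : NNReal}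
    (hC : ∀ n, ∀ᵐ x ∂μ, ‖f n x‖₊ ≤ C)
    (hlim : ∀ᵐ x ∂μ, Tendsto (fun n => f n x) atTop (𝓝 (g x))) :
    Tendsto f atTop (𝓝 g) := by
  rw [Lp.tendsto_Lp_iff_tendsto_eLpNorm']
  have hf (n : ℕ) : AEStronglyMeasurable (f n) μ := Lp.aestronglyMeasurable _
  exact tendsto_Lp_finite_of_tendsto_ae Fact.out hp hf (Lp.memLp g)
    (unifIntegrable_of_ae_nnnorm_le Fact.out hp hf hC) hlim

theorem tendsto_Lp_of_ae_eq_zpow {ν : Measure ℂ} [IsFiniteMeasure ν] {s : Set ℂ}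
    (hcirc : s ⊆ {z : ℂ | ‖z‖ = 1}) (hnull : ν sᶜ = 0) {p : ENNReal} [Fact (1 ≤ p)]
    (hp : p ≠ ⊤) {G : ℤ → Lp ℂ p ν} (hG : ∀ m, ⇑(G m) =ᵐ[ν] fun z => z ^ m) {n : ℕ → ℕ}
    (hn : ∀ z ∈ s, Tendsto (fun k => z ^ n k) atTop (𝓝 1)) :
    Tendsto (fun k => G (n k)) atTop (𝓝 (G 0)) := by
  have hae : ∀ᵐ z ∂ν, z ∈ s ∧ ∀ m, G m z = z ^ m :=
    Eventually.and (mem_ae_iff.2 hnull) (ae_all_iff.2 hG)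
  refine Lp.tendsto_of_ae_tendsto_of_ae_nnnorm_le hp (C := 1) (fun k => ?_) ?_
  · filter_upwards [hae] with z ⟨hz, hGz⟩
    rw [hGz, ← NNReal.coe_le_coe, coe_nnnorm, norm_zpow, hcirc hz, one_zpow, NNReal.coe_one]
  · filter_upwards [hae] with z ⟨hz, hGz⟩
    simpa [hGz] using hn z hz

theorem zpow_never_schauder_basis_general (ν : Measure ℂ) [IsFiniteMeasure ν]
    (hdiscrete : ∃ s : Set ℂ, s.Countable ∧ s ⊆ {z : ℂ | ‖z‖ = 1} ∧ ν sᶜ = 0)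
    (σ : ℤ ≃ ℕ) (F : ℕ → Lp ℂ 2 ν)
    (hF : ∀ n, ⇑(F n) =ᵐ[ν] fun z : ℂ => z ^ (σ.symm n)) :
    ¬ IsSchauderBasis F := by
  intro hbasis
  obtain ⟨s, hs, hcirc, hnull⟩ := hdiscrete
  obtain ⟨n, hn_mono, hn_lim⟩ := exists_strictMono_tendsto_pow_one hs hcirc
  have hconv : Tendsto (fun k => F (σ (n k))) atTop (𝓝 (F (σ 0))) :=
    tendsto_Lp_of_ae_eq_zpow (G := fun m => F (σ m)) hcirc hnull ENNReal.ofNat_ne_top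
      (fun m => by simpa using hF (σ m)) hn_lim
  have hσn : Tendsto (fun k => σ (n k)) atTop atTop :=
    (σ.injective.comp Nat.cast_injective).nat_tendsto_atTop.comp hn_mono.tendsto_atTop
  obtain ⟨C, hC⟩ := hbasis.exists_norm_le_mul_norm_sub
  have hsmall : Tendsto (fun k => C * ‖F (σ 0) - F (σ (n k))‖) atTop (𝓝 0) := by
    simpa using ((hconv.const_sub (F (σ 0))).norm.const_mul C)
  have hnorm : ‖F (σ 0)‖ ≤ 0 :=
    ge_of_tendsto hsmall ((hσn.eventually_gt_atTop (σ 0)).mono fun k hk => hC _ _ hk)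
  exact hbasis.ne_zero (σ 0) (norm_le_zero_iff.mp hnorm)

/-- For a finite discrete measure `ν` on the unit circle with infinite support and any
bijection `σ : ℤ ≃ ℕ`, the sequence `n ↦ z ^ σ⁻¹(n)` is never a Schauder basis of `L²(ν)`. -/
theorem zpow_never_schauder_basis (ν : Measure ℂ) [IsFiniteMeasure ν]
    (hdiscrete : ∃ s : Set ℂ, s.Countable ∧ s ⊆ {z : ℂ | ‖z‖ = 1} ∧ ν sᶜ = 0)
    (hinf : {z : ℂ | ν {z} ≠ 0}.Infinite)
    (σ : ℤ ≃ ℕ) (F : ℕ → Lp ℂ 2 ν)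
    (hF : ∀ n, ⇑(F n) =ᵐ[ν] fun z : ℂ => z ^ (σ.symm n)) :
    ¬ IsSchauderBasis F :=
  zpow_never_schauder_basis_general ν hdiscrete σ F hF
end

section
/- Let ν be a finite positive discrete measure on the unit circle T with infinite support. Then the multiplication operator M_z on L²(T, ν) can never be written as a bilateral shift on a Schauder basis: there is no Schauder basis {ψ_n}_{n≥1} of L²(T, ν) and bijection σ: N → Z such that M_z ψ_{σ^{-1}(m)} = ψ_{σ^{-1}(m+1)} for all m ∈ Z. -/
/-!
`M_z` is an isometry, so a bilateral shift `M_z ψ_{σ⁻¹ m} = ψ_{σ⁻¹ (m+1)}` forces all basis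
vectors to have the norm of `f = ψ_{σ⁻¹ 0}`, and `ψ_{σ⁻¹ j} = z ^ j f` for `j ≥ 0`. Since `ν`
lives on a countable subset of the circle, a diagonal argument gives a subsequence along which
`z ^ j` converges at every point of that set, and dominated convergence turns this into
convergence in `L²(ν)`. But the basis vectors of a Schauder basis are uniformly separated,
`‖ψ m‖ ≤ C ‖ψ m - ψ n‖` (continuity of the coordinate functionals, from the open mapping
theorem), so a Cauchy subsequence of basis vectors must tend to `0` in norm, contradicting
`f ≠ 0`.
-/

open Filter Topology MeasureTheory

open scoped ZeroAtInfty

theorem ZeroAtInftyContinuousMap.norm_apply_le {α β : Type*} [TopologicalSpace α]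
    [SeminormedAddCommGroup β] (f : C₀(α, β)) (x : α) : ‖f x‖ ≤ ‖f‖ :=
  norm_toBCF_eq_norm (f := f) ▸ f.toBCF.norm_coe_le_norm x

theorem tendsto_sum_range_single_smul {H : Type*} [NormedAddCommGroup H] [Module ℂ H]
    (ψ : ℕ → H) (c : ℂ) (m : ℕ) :
    Tendsto (fun k => ∑ n ∈ Finset.range k, (Pi.single m c : ℕ → ℂ) n • ψ n) atTop
      (𝓝 (c • ψ m)) := by
  refine tendsto_const_nhds.congr' ?_
  filter_upwards [eventually_gt_atTop m] with k hk
  rw [Finset.sum_eq_single_of_mem m (Finset.mem_range.2 hk) fun n _ hn => by simp [hn],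
    Pi.single_eq_same]

namespace IsSchauderBasis

variable {H : Type*} [NormedAddCommGroup H] [NormedSpace ℂ H] {ψ : ℕ → H}

theorem ne_zero_s14 (hb : IsSchauderBasis ψ) (m : ℕ) : ψ m ≠ 0 := by
  intro hm
  obtain ⟨a, -, huniq⟩ := hb 0
  have hsingle (c : ℂ) : Pi.single m c = a :=
    huniq _ (by simpa [hm] using tendsto_sum_range_single_smul ψ c m)
  simpa using congrFun ((hsingle 1).trans (hsingle 0).symm) m

variable (ψ) in
/-- `t` lies here iff `t k = t 0 - ∑ n < k, a n • ψ n` for some coefficients `a`, i.e. `t` is the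
sequence of tails of an expansion of `t 0` along `ψ`. -/
def tailSubmodule : Submodule ℂ C₀(ℕ, H) where
  carrier := {t | ∀ k, t k - t (k + 1) ∈ ℂ ∙ ψ k}
  add_mem' {t u} ht hu k := by
    simpa only [ZeroAtInftyContinuousMap.coe_add, Pi.add_apply, add_sub_add_comm]
      using add_mem (ht k) (hu k)
  zero_mem' k := by simp
  smul_mem' c t ht k := by
    simpa only [ZeroAtInftyContinuousMap.coe_smul, Pi.smul_apply, ← smul_sub]
      using Submodule.smul_mem _ c (ht k)

theorem isClosed_tailSubmodule : IsClosed (tailSubmodule ψ : Set C₀(ℕ, H)) := by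
  have hcont (k : ℕ) : Continuous fun t : C₀(ℕ, H) => t k :=
    (continuous_eval_const (F := BoundedContinuousFunction ℕ H) k).comp
      ZeroAtInftyContinuousMap.isometry_toBCF.continuous
  show IsClosed {t : C₀(ℕ, H) | ∀ k, t k - t (k + 1) ∈ ℂ ∙ ψ k}
  rw [Set.ofPred_forall]
  exact isClosed_iInter fun k =>
    (Submodule.closed_of_finiteDimensional _).preimage ((hcont k).sub (hcont (k + 1)))

instance [CompleteSpace H] : CompleteSpace (tailSubmodule ψ) :=
  isClosed_tailSubmodule.isComplete.completeSpace_coe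

variable (ψ) in
noncomputable def tailSum : tailSubmodule ψ →L[ℂ] H :=
  LinearMap.mkContinuous
    { toFun := fun t => (t : C₀(ℕ, H)) 0
      map_add' := fun _ _ => rfl
      map_smul' := fun _ _ => rfl } 1
    fun t => by simpa using (t : C₀(ℕ, H)).norm_apply_le 0

theorem exists_tail {a : ℕ → ℂ} {x : H}
    (ha : Tendsto (fun k => ∑ n ∈ Finset.range k, a n • ψ n) atTop (𝓝 x)) :
    ∃ t : tailSubmodule ψ, tailSum ψ t = x ∧
      ∀ n, (t : C₀(ℕ, H)) n - (t : C₀(ℕ, H)) (n + 1) = a n • ψ n := by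
  let t : C₀(ℕ, H) :=
    ⟨⟨fun k => x - ∑ n ∈ Finset.range k, a n • ψ n, continuous_of_discreteTopology⟩,
      cocompact_eq_atTop (α := ℕ) ▸ by simpa using (tendsto_const_nhds (x := x)).sub ha⟩
  have ht (n : ℕ) : t n - t (n + 1) = a n • ψ n := by
    simp [t, Finset.sum_range_succ]
  exact ⟨⟨t, fun n => ht n ▸ Submodule.smul_mem _ _ (Submodule.mem_span_singleton_self _)⟩,
    by simp [tailSum, t], ht⟩

theorem tailSum_surjective (hb : IsSchauderBasis ψ) : Function.Surjective (tailSum ψ) :=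
  fun x => (exists_tail (hb x).exists.choose_spec).imp fun _ h => h.1

theorem tailSum_injective (hb : IsSchauderBasis ψ) : Function.Injective (tailSum ψ) := by
  refine (injective_iff_map_eq_zero _).2 fun ⟨t, ht⟩ ht0 => ?_
  choose a ha using fun k => Submodule.mem_span_singleton.1 (ht k)
  have hsum (k : ℕ) : ∑ n ∈ Finset.range k, a n • ψ n = -t k := by
    simp only [ha, Finset.sum_range_sub']
    simpa [tailSum] using ht0
  have ha0 : a = 0 := by
    obtain ⟨b, -, huniq⟩ := hb 0
    refine (huniq a ?_).trans (huniq 0 ?_).symm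
    · have h := (cocompact_eq_atTop (α := ℕ) ▸ zero_at_infty t).neg
      rw [neg_zero] at h
      simpa only [hsum] using h
    · simp
  ext k
  simpa [ha0] using (hsum k).symm

theorem exists_norm_smul_le [CompleteSpace H] (hb : IsSchauderBasis ψ) :
    ∃ C, ∀ (x : H) (a : ℕ → ℂ),
      Tendsto (fun k => ∑ n ∈ Finset.range k, a n • ψ n) atTop (𝓝 x) →
      ∀ n, ‖a n • ψ n‖ ≤ C * ‖x‖ := by
  let e := ContinuousLinearEquiv.ofBijective (tailSum ψ)
    (LinearMap.ker_eq_bot.2 hb.tailSum_injective) (LinearMap.range_eq_top.2 hb.tailSum_surjective)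
  refine ⟨2 * ‖(e.symm : H →L[ℂ] tailSubmodule ψ)‖, fun x a ha n => ?_⟩
  obtain ⟨t, rfl, ht⟩ := exists_tail ha
  have het : e.symm (tailSum ψ t) = t := e.symm_apply_apply t
  calc ‖a n • ψ n‖ ≤ ‖t‖ + ‖t‖ := by
        rw [← ht]
        exact norm_sub_le_of_le (ZeroAtInftyContinuousMap.norm_apply_le _ _)
          (ZeroAtInftyContinuousMap.norm_apply_le _ _)
    _ = 2 * ‖(e.symm : H →L[ℂ] tailSubmodule ψ) (tailSum ψ t)‖ := by
        rw [ContinuousLinearEquiv.coe_coe, het, two_mul]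
    _ ≤ 2 * (‖(e.symm : H →L[ℂ] tailSubmodule ψ)‖ * ‖tailSum ψ t‖) := by
        gcongr
        exact ContinuousLinearMap.le_opNorm _ _
    _ = _ := by ring

theorem exists_norm_le_mul_norm_sub_s14 [CompleteSpace H] (hb : IsSchauderBasis ψ) :
    ∃ C, ∀ m n, m ≠ n → ‖ψ m‖ ≤ C * ‖ψ m - ψ n‖ := by
  obtain ⟨C, hbound⟩ := hb.exists_norm_smul_le
  refine ⟨C, fun m n hmn => ?_⟩
  have hexp := (tendsto_sum_range_single_smul ψ 1 m).sub (tendsto_sum_range_single_smul ψ 1 n)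
  simp only [← Finset.sum_sub_distrib, ← sub_smul, one_smul] at hexp
  simpa [hmn] using hbound _ _ hexp m

theorem tendsto_norm_of_cauchySeq [CompleteSpace H] (hb : IsSchauderBasis ψ) {φ : ℕ → ℕ}
    (hφ : Function.Injective φ) (hc : CauchySeq (ψ ∘ φ)) :
    Tendsto (fun k => ‖ψ (φ k)‖) atTop (𝓝 0) := by
  obtain ⟨C, hC⟩ := hb.exists_norm_le_mul_norm_sub_s14
  have hdist : Tendsto (fun k => dist (ψ (φ k)) (ψ (φ (k + 1)))) atTop (𝓝 0) :=
    (cauchySeq_iff_tendsto_dist_atTop_0.1 hc).comp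
      (prod_atTop_atTop_eq (α := ℕ) (β := ℕ) ▸ tendsto_id.prodMk (tendsto_add_atTop_nat 1))
  refine squeeze_zero (fun _ => norm_nonneg _) (fun k => ?_) (by simpa using hdist.const_mul C)
  rw [dist_eq_norm]
  exact hC _ _ (hφ.ne k.succ_ne_self.symm)

end IsSchauderBasis

theorem exists_strictMono_tendsto_of_countable {ι E : Type*} [Countable ι]
    [NormedAddCommGroup E] [ProperSpace E] (u : ℕ → ι → E) (r : ι → ℝ)
    (hu : ∀ j i, ‖u j i‖ ≤ r i) :
    ∃ φ : ℕ → ℕ, StrictMono φ ∧ ∀ i, ∃ l, Tendsto (fun k => u (φ k) i) atTop (𝓝 l) := by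
  have hK : IsCompact (Set.univ.pi fun i => Metric.closedBall (0 : E) (r i)) :=
    isCompact_univ_pi fun i => isCompact_closedBall _ _
  obtain ⟨l, -, φ, hφ, hl⟩ := hK.tendsto_subseq fun j i _ => mem_closedBall_zero_iff.2 (hu j i)
  exact ⟨φ, hφ, fun i => ⟨l i, tendsto_pi_nhds.1 hl i⟩⟩

section DominatedConvergence

variable {α E : Type*} [MeasurableSpace α] {μ : Measure α} [NormedAddCommGroup E]
  {p : ENNReal} {ι : Type*} {f : ι → α → E} {F : α → E}

theorem eLpNorm_indicator_le_of_ae_norm_le {g : α → E} (h : ∀ᵐ x ∂μ, ‖g x‖ ≤ ‖F x‖)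
    (s : Set α) : eLpNorm (s.indicator g) p μ ≤ eLpNorm (s.indicator F) p μ :=
  eLpNorm_mono_ae (h.mono fun x hx => by by_cases hxs : x ∈ s <;> simp [hxs, hx])

theorem unifIntegrable_of_ae_norm_le (hp : 1 ≤ p) (hp' : p ≠ ⊤) (hF : MemLp F p μ)
    (h : ∀ i, ∀ᵐ x ∂μ, ‖f i x‖ ≤ ‖F x‖) : UnifIntegrable f p μ := fun ε hε => by
  obtain ⟨δ, hδ, hFδ⟩ := hF.eLpNorm_indicator_le hp hp' hε
  exact ⟨δ, hδ, fun i s hs hμs =>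
    (eLpNorm_indicator_le_of_ae_norm_le (h i) s).trans (hFδ s hs hμs)⟩

theorem unifTight_of_ae_norm_le (hp' : p ≠ ⊤) (hF : MemLp F p μ)
    (h : ∀ i, ∀ᵐ x ∂μ, ‖f i x‖ ≤ ‖F x‖) : UnifTight f p μ := fun ε hε => by
  obtain ⟨s, hs, hFs⟩ := unifTight_const (ι := Unit) hp' hF hε
  exact ⟨s, hs, fun i => (eLpNorm_indicator_le_of_ae_norm_le (h i) sᶜ).trans (hFs ())⟩

theorem Lp.exists_tendsto_of_ae_tendsto_of_norm_le [Fact (1 ≤ p)] (hp : p ≠ ⊤)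
    {g : ℕ → Lp E p μ} (F : Lp E p μ) (hdom : ∀ k, ∀ᵐ x ∂μ, ‖g k x‖ ≤ ‖F x‖)
    (hlim : ∀ᵐ x ∂μ, ∃ l, Tendsto (fun k => g k x) atTop (𝓝 l)) :
    ∃ G : Lp E p μ, Tendsto g atTop (𝓝 G) := by
  set G : α → E := fun x => limUnder atTop fun k => g k x
  have hG : ∀ᵐ x ∂μ, Tendsto (fun k => g k x) atTop (𝓝 (G x)) :=
    hlim.mono fun x ⟨l, hl⟩ => by rwa [show G x = l from hl.limUnder_eq]
  have hGle : ∀ᵐ x ∂μ, ‖G x‖ ≤ ‖F x‖ := by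
    filter_upwards [hG, ae_all_iff.2 hdom] with x hx hxle
    exact le_of_tendsto' hx.norm hxle
  have hGmem : MemLp G p μ := (Lp.memLp F).of_le
    (aestronglyMeasurable_of_tendsto_ae atTop (fun k => Lp.aestronglyMeasurable (g k)) hG) hGle
  refine ⟨hGmem.toLp G, Lp.tendsto_Lp_of_tendsto_eLpNorm G hGmem ?_⟩
  exact tendsto_Lp_of_tendsto_ae Fact.out hp (fun k => Lp.aestronglyMeasurable (g k)) hGmem
    (unifIntegrable_of_ae_norm_le Fact.out hp (Lp.memLp F) hdom)
    (unifTight_of_ae_norm_le hp (Lp.memLp F) hdom) hG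

end DominatedConvergence

theorem norm_eq_norm_zero_of_shift {E : Type*} [NormedAddCommGroup E] {T : E → E}
    (hT : ∀ x, ‖T x‖ = ‖x‖) {v : ℤ → E} (hv : ∀ m, T (v m) = v (m + 1)) (m : ℤ) :
    ‖v m‖ = ‖v 0‖ := by
  induction m using Int.induction_on with
  | zero => rfl
  | succ k ih => rw [← hv, hT, ih]
  | pred k ih => rw [← ih, ← hT, hv, sub_add_cancel]

section Multiplication

variable {ν : Measure ℂ} {T : Lp ℂ 2 ν → Lp ℂ 2 ν}

theorem norm_eq_of_ae_eq_mul (hν : ∀ᵐ z ∂ν, ‖z‖ = 1) {g h : Lp ℂ 2 ν}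
    (hh : ⇑h =ᵐ[ν] fun z => z * g z) : ‖h‖ = ‖g‖ := by
  have hnorm : ∀ᵐ z ∂ν, ‖h z‖ = ‖g z‖ := by
    filter_upwards [hh, hν] with z hz hz1
    rw [hz, norm_mul, hz1, one_mul]
  exact le_antisymm (Lp.norm_le_norm_of_ae_le (hnorm.mono fun _ => le_of_eq))
    (Lp.norm_le_norm_of_ae_le (hnorm.mono fun _ => ge_of_eq))

theorem ae_eq_pow_mul_of_shift (hT : ∀ g, ⇑(T g) =ᵐ[ν] fun z => z * g z)
    {v : ℕ → Lp ℂ 2 ν} (hv : ∀ j, T (v j) = v (j + 1)) (j : ℕ) :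
    ⇑(v j) =ᵐ[ν] fun z => z ^ j * v 0 z := by
  induction j with
  | zero => simp
  | succ j ih =>
    filter_upwards [hv j ▸ hT (v j), ih] with z hz hzj
    rw [hz, hzj, pow_succ', mul_assoc]

end Multiplication

theorem mul_op_never_shift_on_basis_general (ν : Measure ℂ)
    (hdiscrete : ∃ s : Set ℂ, s.Countable ∧ s ⊆ {z : ℂ | ‖z‖ = 1} ∧ ν sᶜ = 0)
    (Mz : Lp ℂ 2 ν →L[ℂ] Lp ℂ 2 ν)
    (hMz : ∀ g : Lp ℂ 2 ν, ⇑(Mz g) =ᵐ[ν] fun z : ℂ => z * g z) :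
    ¬ ∃ (ψ : ℕ → Lp ℂ 2 ν) (σ : ℕ ≃ ℤ), IsSchauderBasis ψ ∧
        ∀ m : ℤ, Mz (ψ (σ.symm m)) = ψ (σ.symm (m + 1)) := by
  rintro ⟨ψ, σ, hb, hshift⟩
  obtain ⟨s, hs, hs_circle, hs_null⟩ := hdiscrete
  have hae_s : ∀ᵐ z ∂ν, z ∈ s := hs_null
  have hae_circle : ∀ᵐ z ∂ν, ‖z‖ = 1 := hae_s.mono hs_circle
  set v : ℤ → Lp ℂ 2 ν := fun m => ψ (σ.symm m)
  have hnorm := norm_eq_norm_zero_of_shift (fun g => norm_eq_of_ae_eq_mul hae_circle (hMz g)) hshift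
  have hpow := ae_eq_pow_mul_of_shift hMz (v := fun j : ℕ => v j) fun j => by simpa using hshift j
  have : Countable s := hs.to_subtype
  obtain ⟨φ, hφ, hconv⟩ := exists_strictMono_tendsto_of_countable
    (fun j (z : s) => (z : ℂ) ^ j) 1 fun j z => by simp [show ‖(z : ℂ)‖ = 1 from hs_circle z.2]
  obtain ⟨G, hG⟩ := Lp.exists_tendsto_of_ae_tendsto_of_norm_le (ENNReal.ofNat_ne_top (n := 2))
    (g := fun k => v (φ k)) (v 0)
    (fun k => by
      filter_upwards [hpow (φ k), hae_circle] with z hz hz1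
      simp [hz, hz1])
    (by
      filter_upwards [hae_s, ae_all_iff.2 hpow] with z hz hzpow
      obtain ⟨l, hl⟩ := hconv ⟨z, hz⟩
      exact ⟨l * v 0 z, (hl.mul_const _).congr fun k => (hzpow (φ k)).symm⟩)
  have hψ0 := hb.tendsto_norm_of_cauchySeq
    (σ.symm.injective.comp (Nat.cast_injective.comp hφ.injective)) hG.cauchySeq
  have hv0 : ‖v 0‖ = 0 := tendsto_nhds_unique tendsto_const_nhds (hψ0.congr fun k => hnorm _)
  exact hb.ne_zero_s14 _ (norm_eq_zero.1 hv0)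

/-- For a finite discrete measure on the circle with infinite support, the multiplication
operator `M_z` on `L²(ν)` is never a bilateral shift on a Schauder basis. -/
theorem mul_op_never_shift_on_basis (ν : Measure ℂ) [IsFiniteMeasure ν]
    (hdiscrete : ∃ s : Set ℂ, s.Countable ∧ s ⊆ {z : ℂ | ‖z‖ = 1} ∧ ν sᶜ = 0)
    (hinf : {z : ℂ | ν {z} ≠ 0}.Infinite)
    (Mz : Lp ℂ 2 ν →L[ℂ] Lp ℂ 2 ν)
    (hMz : ∀ g : Lp ℂ 2 ν, ⇑(Mz g) =ᵐ[ν] fun z : ℂ => z * g z) :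
    ¬ ∃ (ψ : ℕ → Lp ℂ 2 ν) (σ : ℕ ≃ ℤ), IsSchauderBasis ψ ∧
        ∀ m : ℤ, Mz (ψ (σ.symm m)) = ψ (σ.symm (m + 1)) :=
  mul_op_never_shift_on_basis_general ν hdiscrete Mz hMz
end
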